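/- arXiv:2002.01514 — 5 statements merged into one kernel-verified Lean document; each statement's English description precedes it below -/
import Mathlib

section
/- The functions g₁(t) = (1+4t)^{1/2} and g₃(t) = 1 defined on (-1/4, ∞) satisfy the ODE system g₁' = (a² + g₃²)/(g₁ g₃), g₃' = (a² - g₃²)/g₁² with a = 1 and initial conditions g₁(0) = g₃(0) = 1. -/
theorem hasDerivAt_rpow_half_affine {a b t : ℝ} (h : a + b * t ≠ 0) :
    HasDerivAt (fun s => (a + b * s) ^ (1 / 2 : ℝ)) (b / (2 * (a + b * t) ^ (1 / 2 : ℝ))) t := by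
  simp_rw [← Real.sqrt_eq_rpow]
  simpa using ((hasDerivAt_id t).const_mul b |>.const_add a).sqrt h

/-- The functions `g₁(t) = (1+4t)^(1/2)` and `g₃(t) = 1` on `(-1/4, ∞)` solve the
generalized Ricci flow system `g₁' = (a² + g₃²)/(g₁ g₃)`, `g₃' = (a² - g₃²)/g₁²`
with `a = 1` and `g₁(0) = g₃(0) = 1`. -/
theorem stmt4 :
    ∃ (a : ℝ) (g₁ g₃ : ℝ → ℝ), a = 1 ∧
      (g₁ = fun t : ℝ => (1 + 4 * t) ^ ((1/2 : ℝ))) ∧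
      (g₃ = fun _ : ℝ => 1) ∧
      g₁ 0 = 1 ∧ g₃ 0 = 1 ∧
      ∀ t : ℝ, -(1/4) < t →
        HasDerivAt g₁ ((a ^ 2 + g₃ t ^ 2) / (g₁ t * g₃ t)) t ∧
        HasDerivAt g₃ ((a ^ 2 - g₃ t ^ 2) / g₁ t ^ 2) t := by
  refine ⟨1, _, _, rfl, rfl, rfl, by norm_num, rfl, fun t ht => ⟨?_, ?_⟩⟩
  · convert hasDerivAt_rpow_half_affine (a := 1) (b := 4) (t := t) (by linarith) using 1
    ring
  · simpa using hasDerivAt_const t (1 : ℝ)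
end

section
/- Let a > 0 and suppose g₁, g₃ : [0, ∞) → ℝ are positive differentiable functions satisfying g₁' = (a² + g₃²)/(g₁g₃) and g₃' = (a² - g₃²)/g₁² with g₁(0) = g₃(0) = 1. Then for all t ≥ 0: if a < 1 then g₃ is strictly decreasing while g₃(t) > a, and if a > 1 then g₃ is strictly increasing while g₃(t) < a; in particular min(1,a) ≤ g₃(t) ≤ max(1,a) for all t ≥ 0. -/
/-!
Writing `u = g₃ - a`, the second equation reads `u' = -((g₃ + a) / g₁²) u`, a linear equation
in `u` with a continuous coefficient. By uniqueness of solutions, `u` vanishes either everywhere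
or nowhere, so `g₃ = a` is an invariant value and, by the intermediate value theorem, `g₃ - a`
keeps the sign of `g₃ 0 - a = 1 - a`. Then `g₃' = (a - g₃)(a + g₃) / g₁²` has the sign of
`a - 1`, which gives the monotonicity, and the bounds follow from `g₃ 0 = 1`.
-/

open Set

theorem eq_zero_left_iff_eq_zero_right_of_hasDerivAt_mul {f k : ℝ → ℝ} {a b : ℝ} (hab : a ≤ b)
    (hk : ContinuousOn k (Icc a b)) (hf : ∀ t ∈ Icc a b, HasDerivAt f (k t * f t) t) :
    f a = 0 ↔ f b = 0 := by
  obtain ⟨C, hC⟩ := isCompact_Icc.exists_bound_of_continuousOn hk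
  have hlip : ∀ t ∈ Icc a b, LipschitzOnWith C.toNNReal (k t * ·) univ := fun t ht =>
    ((lipschitzWith_smul (k t)).weaken
      (norm_toNNReal (a := k t) ▸ Real.toNNReal_le_toNNReal (hC t ht))).lipschitzOnWith
  have hfc : ContinuousOn f (Icc a b) := fun t ht => (hf t ht).continuousAt.continuousWithinAt
  have h0 : ∀ t ∈ Icc a b, HasDerivAt (fun _ => (0 : ℝ)) (k t * 0) t := fun t _ => by
    simpa using hasDerivAt_const t (0 : ℝ)
  constructor
  · intro ha
    exact ODE_solution_unique_of_mem_Icc_right (fun t ht => hlip t (Ico_subset_Icc_self ht))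
      hfc (fun t ht => (hf t (Ico_subset_Icc_self ht)).hasDerivWithinAt) (fun _ _ => mem_univ _)
      continuousOn_const (fun t ht => (h0 t (Ico_subset_Icc_self ht)).hasDerivWithinAt)
      (fun _ _ => mem_univ _) ha ⟨hab, le_rfl⟩
  · intro hb
    exact ODE_solution_unique_of_mem_Icc_left (fun t ht => hlip t (Ioc_subset_Icc_self ht))
      hfc (fun t ht => (hf t (Ioc_subset_Icc_self ht)).hasDerivWithinAt) (fun _ _ => mem_univ _)
      continuousOn_const (fun t ht => (h0 t (Ioc_subset_Icc_self ht)).hasDerivWithinAt)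
      (fun _ _ => mem_univ _) hb ⟨le_rfl, hab⟩

theorem IsPreconnected.lt_iff_lt_of_forall_ne {X α : Type*} [TopologicalSpace X] [LinearOrder α]
    [TopologicalSpace α] [OrderClosedTopology α] {s : Set X} (hs : IsPreconnected s) {f : X → α}
    (hf : ContinuousOn f s) {c : α} (hc : ∀ x ∈ s, f x ≠ c) {x y : X} (hx : x ∈ s) (hy : y ∈ s) :
    f x < c ↔ f y < c := by
  suffices key : ∀ x ∈ s, ∀ y ∈ s, f x < c → f y < c from ⟨key x hx y hy, key y hy x hx⟩
  intro x hx y hy hxc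
  by_contra! hyc
  obtain ⟨z, hz, hzc⟩ := hs.intermediate_value hx hy hf ⟨hxc.le, hyc⟩
  exact hc z hz hzc

structure IsHeisenbergRicciFlow (a : ℝ) (g₁ g₃ : ℝ → ℝ) : Prop where
  pos₁ : ∀ t ≥ (0:ℝ), 0 < g₁ t
  hasDerivAt₁ : ∀ t ≥ (0:ℝ), HasDerivAt g₁ ((a ^ 2 + g₃ t ^ 2) / (g₁ t * g₃ t)) t
  hasDerivAt₃ : ∀ t ≥ (0:ℝ), HasDerivAt g₃ ((a ^ 2 - g₃ t ^ 2) / g₁ t ^ 2) t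

namespace IsHeisenbergRicciFlow

variable {a : ℝ} {g₁ g₃ : ℝ → ℝ}

theorem continuousOn₃ (hg : IsHeisenbergRicciFlow a g₁ g₃) : ContinuousOn g₃ (Ici 0) :=
  fun t ht => (hg.hasDerivAt₃ t ht).continuousAt.continuousWithinAt

theorem hasDerivAt_sub_const {t : ℝ} (hg : IsHeisenbergRicciFlow a g₁ g₃) (ht : 0 ≤ t) :
    HasDerivAt (fun s => g₃ s - a) (-(g₃ t + a) / g₁ t ^ 2 * (g₃ t - a)) t :=
  ((hg.hasDerivAt₃ t ht).sub_const a).congr_deriv (by ring)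

theorem eq_const_iff {t : ℝ} (hg : IsHeisenbergRicciFlow a g₁ g₃) (ht : 0 ≤ t) :
    g₃ t = a ↔ g₃ 0 = a := by
  have hk : ContinuousOn (fun s => -(g₃ s + a) / g₁ s ^ 2) (Icc 0 t) := by
    refine ContinuousOn.div ?_ ?_ fun s hs => (pow_pos (hg.pos₁ s hs.1) 2).ne'
    · exact ((hg.continuousOn₃.mono Icc_subset_Ici_self).add continuousOn_const).neg
    · exact ContinuousOn.pow
        (fun s hs => (hg.hasDerivAt₁ s hs.1).continuousAt.continuousWithinAt) 2
  simpa only [sub_eq_zero] using (eq_zero_left_iff_eq_zero_right_of_hasDerivAt_mul ht hk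
    fun s hs => hg.hasDerivAt_sub_const hs.1).symm

theorem lt_const_iff {t : ℝ} (hg : IsHeisenbergRicciFlow a g₁ g₃) (h₀ : g₃ 0 ≠ a) (ht : 0 ≤ t) :
    g₃ t < a ↔ g₃ 0 < a :=
  isPreconnected_Ici.lt_iff_lt_of_forall_ne hg.continuousOn₃
    (fun _ hs => (hg.eq_const_iff hs).not.2 h₀) ht self_mem_Ici

theorem const_lt_of_const_lt {t : ℝ} (hg : IsHeisenbergRicciFlow a g₁ g₃) (h₀ : a < g₃ 0)
    (ht : 0 ≤ t) : a < g₃ t :=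
  lt_of_le_of_ne (not_lt.1 ((hg.lt_const_iff h₀.ne' ht).not.2 h₀.not_gt))
    (Ne.symm ((hg.eq_const_iff ht).not.2 h₀.ne'))

theorem strictAntiOn (hg : IsHeisenbergRicciFlow a g₁ g₃) (ha : 0 < a) (h₀ : a < g₃ 0) :
    StrictAntiOn g₃ (Ici 0) :=
  strictAntiOn_of_hasDerivWithinAt_neg (convex_Ici 0) hg.continuousOn₃
    (fun t ht => (hg.hasDerivAt₃ t (interior_subset ht)).hasDerivWithinAt) fun t ht => by
      have h := hg.const_lt_of_const_lt h₀ (interior_subset ht)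
      have := hg.pos₁ t (interior_subset ht)
      exact div_neg_of_neg_of_pos (by nlinarith) (by positivity)

theorem strictMonoOn (hg : IsHeisenbergRicciFlow a g₁ g₃)
    (hpos₃ : ∀ t ≥ (0:ℝ), 0 < g₃ t) (h₀ : g₃ 0 < a) : StrictMonoOn g₃ (Ici 0) :=
  strictMonoOn_of_hasDerivWithinAt_pos (convex_Ici 0) hg.continuousOn₃
    (fun t ht => (hg.hasDerivAt₃ t (interior_subset ht)).hasDerivWithinAt) fun t ht => by
      have h := (hg.lt_const_iff h₀.ne (interior_subset ht)).2 h₀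
      have := hg.pos₁ t (interior_subset ht)
      have := hpos₃ t (interior_subset ht)
      exact div_pos (by nlinarith) (by positivity)

end IsHeisenbergRicciFlow

theorem stmt5_general (a : ℝ) (ha : 0 < a) (g₁ g₃ : ℝ → ℝ)
    (hpos1 : ∀ t ≥ (0:ℝ), 0 < g₁ t) (hpos3 : ∀ t ≥ (0:ℝ), 0 < g₃ t)
    (h1 : ∀ t ≥ (0:ℝ), HasDerivAt g₁ ((a ^ 2 + g₃ t ^ 2) / (g₁ t * g₃ t)) t)
    (h3 : ∀ t ≥ (0:ℝ), HasDerivAt g₃ ((a ^ 2 - g₃ t ^ 2) / g₁ t ^ 2) t)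
    (h30 : g₃ 0 = 1) :
    (a < 1 → StrictAntiOn g₃ (Set.Ici (0:ℝ)) ∧ ∀ t ≥ (0:ℝ), a < g₃ t) ∧
    (1 < a → StrictMonoOn g₃ (Set.Ici (0:ℝ)) ∧ ∀ t ≥ (0:ℝ), g₃ t < a) ∧
    (∀ t ≥ (0:ℝ), min 1 a ≤ g₃ t ∧ g₃ t ≤ max 1 a) := by
  have hg : IsHeisenbergRicciFlow a g₁ g₃ := ⟨hpos1, h1, h3⟩
  rw [← h30]
  refine ⟨fun ha1 => ⟨hg.strictAntiOn ha ha1, fun t => hg.const_lt_of_const_lt ha1⟩,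
    fun ha1 => ⟨hg.strictMonoOn hpos3 ha1, fun t ht => (hg.lt_const_iff ha1.ne ht).2 ha1⟩,
    fun t ht => ?_⟩
  rcases lt_trichotomy a (g₃ 0) with ha1 | ha1 | ha1
  · rw [min_eq_right ha1.le, max_eq_left ha1.le]
    exact ⟨(hg.const_lt_of_const_lt ha1 ht).le,
      (hg.strictAntiOn ha ha1).antitoneOn self_mem_Ici ht ht⟩
  · simp [(hg.eq_const_iff ht).2 ha1.symm, ← ha1]
  · rw [min_eq_left ha1.le, max_eq_right ha1.le]
    exact ⟨(hg.strictMonoOn hpos3 ha1).monotoneOn self_mem_Ici ht ht,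
      ((hg.lt_const_iff ha1.ne ht).2 ha1).le⟩

/-- Qualitative behavior of the generalized Ricci flow system on the Heisenberg group:
along positive solutions of `g₁' = (a² + g₃²)/(g₁g₃)`, `g₃' = (a² - g₃²)/g₁²` with
`g₁(0) = g₃(0) = 1`, if `a < 1` then `g₃` is strictly decreasing and stays above `a`,
if `a > 1` then `g₃` is strictly increasing and stays below `a`, and in any case
`min 1 a ≤ g₃ ≤ max 1 a`. -/
theorem stmt5 (a : ℝ) (ha : 0 < a) (g₁ g₃ : ℝ → ℝ)
    (hpos1 : ∀ t ≥ (0:ℝ), 0 < g₁ t) (hpos3 : ∀ t ≥ (0:ℝ), 0 < g₃ t)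
    (h1 : ∀ t ≥ (0:ℝ), HasDerivAt g₁ ((a ^ 2 + g₃ t ^ 2) / (g₁ t * g₃ t)) t)
    (h3 : ∀ t ≥ (0:ℝ), HasDerivAt g₃ ((a ^ 2 - g₃ t ^ 2) / g₁ t ^ 2) t)
    (h10 : g₁ 0 = 1) (h30 : g₃ 0 = 1) :
    (a < 1 → StrictAntiOn g₃ (Set.Ici (0:ℝ)) ∧ ∀ t ≥ (0:ℝ), a < g₃ t) ∧
    (1 < a → StrictMonoOn g₃ (Set.Ici (0:ℝ)) ∧ ∀ t ≥ (0:ℝ), g₃ t < a) ∧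
    (∀ t ≥ (0:ℝ), min 1 a ≤ g₃ t ∧ g₃ t ≤ max 1 a) :=
  stmt5_general a ha g₁ g₃ hpos1 hpos3 h1 h3 h30
end

section
/- Let a > 0 and suppose g₁, g₃ : [0, ∞) → ℝ are positive differentiable functions satisfying g₁' = (a² + g₃²)/(g₁g₃) and g₃' = (a² - g₃²)/g₁² with g₁(0) = g₃(0) = 1. Then g₁(t) → ∞ as t → ∞. -/
/-- Long-time behavior of the generalized Ricci flow on the Heisenberg group:
along positive solutions of `g₁' = (a² + g₃²)/(g₁g₃)`, `g₃' = (a² - g₃²)/g₁²`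
with `g₁(0) = g₃(0) = 1`, one has `g₁(t) → ∞` as `t → ∞`. -/
theorem stmt6 (a : ℝ) (ha : 0 < a) (g₁ g₃ : ℝ → ℝ)
    (hpos1 : ∀ t ≥ (0:ℝ), 0 < g₁ t) (hpos3 : ∀ t ≥ (0:ℝ), 0 < g₃ t)
    (h1 : ∀ t ≥ (0:ℝ), HasDerivAt g₁ ((a ^ 2 + g₃ t ^ 2) / (g₁ t * g₃ t)) t)
    (h3 : ∀ t ≥ (0:ℝ), HasDerivAt g₃ ((a ^ 2 - g₃ t ^ 2) / g₁ t ^ 2) t)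
    (h10 : g₁ 0 = 1) (h30 : g₃ 0 = 1) :
    Filter.Tendsto g₁ Filter.atTop Filter.atTop := by
  set F : ℝ → ℝ := fun t => g₁ t ^ 2 - 4 * a * t with hF
  have hFd : ∀ t ≥ (0:ℝ), HasDerivAt F
      (2 * g₁ t ^ 1 * ((a ^ 2 + g₃ t ^ 2) / (g₁ t * g₃ t)) - 4 * a) t := by
    intro t ht
    exact ((h1 t ht).pow 2).sub
      (by simpa using (hasDerivAt_id t).const_mul (4 * a))
  have hderiv_nonneg : ∀ t ≥ (0:ℝ),
      0 ≤ 2 * g₁ t ^ 1 * ((a ^ 2 + g₃ t ^ 2) / (g₁ t * g₃ t)) - 4 * a := by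
    intro t ht
    have h1p := hpos1 t ht
    have h3p := hpos3 t ht
    have key : 4 * a ≤ 2 * g₁ t ^ 1 * ((a ^ 2 + g₃ t ^ 2) / (g₁ t * g₃ t)) := by
      rw [pow_one, ← mul_div_assoc, le_div_iff₀ (by positivity)]
      ring_nf
      nlinarith [sq_nonneg (a - g₃ t), h1p.le, h3p.le]
    linarith
  have hmono : MonotoneOn F (Set.Ici (0:ℝ)) := by
    apply monotoneOn_of_deriv_nonneg (convex_Ici 0)
    · intro t ht
      exact ((hFd t ht).continuousAt).continuousWithinAt
    · intro t ht
      rw [interior_Ici] at ht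
      exact (hFd t ht.le).differentiableAt.differentiableWithinAt
    · intro t ht
      rw [interior_Ici] at ht
      rw [(hFd t ht.le).deriv]
      exact hderiv_nonneg t ht.le
  rw [Filter.tendsto_atTop]
  intro b
  filter_upwards [Filter.eventually_ge_atTop (max 0 (b ^ 2 / (4 * a)))] with t ht
  have ht0 : (0:ℝ) ≤ t := le_trans (le_max_left _ _) ht
  have ht1 : b ^ 2 / (4 * a) ≤ t := le_trans (le_max_right _ _) ht
  have hm := hmono (Set.self_mem_Ici) ht0 ht0
  simp only [hF] at hm
  rw [h10] at hm
  have hsq : 1 + 4 * a * t ≤ g₁ t ^ 2 := by nlinarith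
  have hb2 : b ^ 2 ≤ 4 * a * t := by
    rw [div_le_iff₀ (by positivity)] at ht1; linarith
  nlinarith [hpos1 t ht0]
end

section
/- Let μ be a Lie bracket on ℝⁿ and H ∈ Λ³(ℝⁿ)*. Define the bracket 𝛍_H on ℝⁿ ⊕ (ℝⁿ)* by 𝛍_H(X+ξ, Y+η) = μ(X,Y) - η∘ad_μ(X) + ξ∘ad_μ(Y) + H(X,Y,·). Then 𝛍_H satisfies the Jacobi identity 𝛍_H(z₁,𝛍_H(z₂,z₃)) = 𝛍_H(𝛍_H(z₁,z₂),z₃) + 𝛍_H(z₂,𝛍_H(z₁,z₃)) for all z₁,z₂,z₃ if and only if d_μ H = 0, where d_μ is the Chevalley-Eilenberg differential. -/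
/-- The left-invariant Dorfman bracket `𝛍_H` on `ℝⁿ ⊕ (ℝⁿ)*` associated with a
bracket `μ` and a 3-form `H`:
`𝛍_H(X+ξ, Y+η) = μ(X,Y) - η∘ad_μ(X) + ξ∘ad_μ(Y) + H(X,Y,·)`. -/
def dorfman {n : ℕ}
    (μ : (Fin n → ℝ) →ₗ[ℝ] (Fin n → ℝ) →ₗ[ℝ] (Fin n → ℝ))
    (H : (Fin n → ℝ) →ₗ[ℝ] (Fin n → ℝ) →ₗ[ℝ] Module.Dual ℝ (Fin n → ℝ))
    (z w : (Fin n → ℝ) × Module.Dual ℝ (Fin n → ℝ)) :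
    (Fin n → ℝ) × Module.Dual ℝ (Fin n → ℝ) :=
  (μ z.1 w.1, -(w.2.comp (μ z.1)) + z.2.comp (μ w.1) + H z.1 w.1)

/-- For a Lie bracket `μ` on `ℝⁿ` and an alternating 3-form `H`, the Dorfman bracket
`𝛍_H` satisfies the Jacobi identity iff `d_μ H = 0`. -/
theorem stmt14 (n : ℕ)
    (μ : (Fin n → ℝ) →ₗ[ℝ] (Fin n → ℝ) →ₗ[ℝ] (Fin n → ℝ))
    (hskew : ∀ X : Fin n → ℝ, μ X X = 0)
    (hjac : ∀ X Y Z : Fin n → ℝ, μ X (μ Y Z) = μ (μ X Y) Z + μ Y (μ X Z))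
    (H : (Fin n → ℝ) →ₗ[ℝ] (Fin n → ℝ) →ₗ[ℝ] Module.Dual ℝ (Fin n → ℝ))
    (hH1 : ∀ X Y Z : Fin n → ℝ, H X Y Z = -(H Y X Z))
    (hH2 : ∀ X Y Z : Fin n → ℝ, H X Y Z = -(H X Z Y)) :
    (∀ z₁ z₂ z₃ : (Fin n → ℝ) × Module.Dual ℝ (Fin n → ℝ),
      dorfman μ H z₁ (dorfman μ H z₂ z₃) =
        dorfman μ H (dorfman μ H z₁ z₂) z₃ + dorfman μ H z₂ (dorfman μ H z₁ z₃)) ↔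
    (∀ X₁ X₂ X₃ X₄ : Fin n → ℝ,
      H (μ X₁ X₂) X₃ X₄ - H (μ X₁ X₃) X₂ X₄ + H (μ X₁ X₄) X₂ X₃ +
        H (μ X₂ X₃) X₁ X₄ - H (μ X₂ X₄) X₁ X₃ + H (μ X₃ X₄) X₁ X₂ = 0) := by
  have cyc : ∀ A B C : Fin n → ℝ, H A B C = H C A B := fun A B C => by
    rw [hH2 A B C, hH1 A C B, neg_neg]
  constructor
  · intro h X₁ X₂ X₃ X₄
    have key := congrArg (fun z => z.2 X₄) (h (X₁, 0) (X₂, 0) (X₃, 0))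
    simp only [dorfman, Prod.snd_add, LinearMap.add_apply, LinearMap.neg_apply,
      LinearMap.comp_apply, LinearMap.zero_comp, LinearMap.comp_zero, neg_zero,
      zero_add, add_zero, LinearMap.zero_apply] at key
    have c1 := cyc X₂ X₃ (μ X₁ X₄)
    have c2 := cyc X₁ X₂ (μ X₃ X₄)
    have c3 := cyc X₁ X₃ (μ X₂ X₄)
    have c4 := hH1 X₁ (μ X₂ X₃) X₄
    have c5 := hH1 X₂ (μ X₁ X₃) X₄
    linarith [key]
  · intro h z₁ z₂ z₃
    obtain ⟨X, ξ⟩ := z₁; obtain ⟨Y, η⟩ := z₂; obtain ⟨Z, ζ⟩ := z₃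
    refine Prod.ext (hjac X Y Z) (LinearMap.ext fun W => ?_)
    simp only [dorfman, Prod.snd_add, LinearMap.add_apply, LinearMap.neg_apply,
      LinearMap.comp_apply, neg_add_rev]
    have hζ : ζ ((μ X) ((μ Y) W)) = ζ ((μ ((μ X) Y)) W) + ζ ((μ Y) ((μ X) W)) := by
      rw [hjac]; exact map_add ζ _ _
    have hη : η ((μ X) ((μ Z) W)) = η ((μ ((μ X) Z)) W) + η ((μ Z) ((μ X) W)) := by
      rw [hjac]; exact map_add η _ _
    have hξ : ξ ((μ Y) ((μ Z) W)) = ξ ((μ ((μ Y) Z)) W) + ξ ((μ Z) ((μ Y) W)) := by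
      rw [hjac]; exact map_add ξ _ _
    have hd := h X Y Z W
    have c1 := cyc Y Z ((μ X) W)
    have c2 := cyc X Y ((μ Z) W)
    have c3 := cyc X Z ((μ Y) W)
    have c4 := hH1 X ((μ Y) Z) W
    have c5 := hH1 Y ((μ X) Z) W
    linarith
end

section
/- Let μ(t) = x(t)·μ₀ where μ₀ is the Heisenberg bracket on ℝ³ (μ₀(e₁,e₂)=e₃) and let H(t) = y(t)e^{123}. Set φ(t) = Ric_{μ(t)} - (1/4)H(t)², with coordinates φ_i^j = -(1/2)μ_{ik}^l μ_{jk}^l + (1/4)μ_{kl}^i μ_{kl}^j - (1/4)H_{ikl}H_{jkl}. Then the pair (μ(t), H(t)) solves the generalized bracket flow μ̇ = -π(φ)μ, Ḣ = -π(φ)H if and only if ẋ = -(3/2)x³ - (1/2)xy² and ẏ = -(3/2)y³ - (1/2)x²y. -/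
/-- Levi-Civita symbol on `Fin 3` (`ε₀₁₂ = 1`, totally antisymmetric). -/
noncomputable def eps (i j k : Fin 3) : ℝ :=
  ((j : ℝ) - (i : ℝ)) * ((k : ℝ) - (j : ℝ)) * ((k : ℝ) - (i : ℝ)) / 2

/-- Structure constants of the Heisenberg bracket `μ₀` on `ℝ³` (`μ₀(e₁,e₂) = e₃`). -/
noncomputable def heisC (i j k : Fin 3) : ℝ :=
  if i = 0 ∧ j = 1 ∧ k = 2 then 1 else if i = 1 ∧ j = 0 ∧ k = 2 then -1 else 0

/-- Structure constants of `μ(t) = x(t)·μ₀`. -/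
noncomputable def muC (x : ℝ → ℝ) (t : ℝ) (i j k : Fin 3) : ℝ := x t * heisC i j k

/-- Components of `H(t) = y(t)·e¹²³`. -/
noncomputable def HC (y : ℝ → ℝ) (t : ℝ) (i j k : Fin 3) : ℝ := y t * eps i j k

/-- Components of `φ(t) = Ric_{μ(t)} - (1/4)H(t)²`:
`φ_i^j = -(1/2)μ_{ik}^l μ_{jk}^l + (1/4)μ_{kl}^i μ_{kl}^j - (1/4)H_{ikl}H_{jkl}`. -/
noncomputable def phiC (x y : ℝ → ℝ) (t : ℝ) (i j : Fin 3) : ℝ :=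
  -(1/2) * ∑ k, ∑ l, muC x t i k l * muC x t j k l +
  (1/4) * ∑ k, ∑ l, muC x t k l i * muC x t k l j -
  (1/4) * ∑ k, ∑ l, HC y t i k l * HC y t j k l

/-- Components of `-π(φ)μ`, the right-hand side of the generalized bracket flow for `μ`. -/
noncomputable def flowMu (x y : ℝ → ℝ) (t : ℝ) (i j k : Fin 3) : ℝ :=
  ∑ l, phiC x y t i l * muC x t l j k + ∑ l, phiC x y t j l * muC x t i l k -
    ∑ l, phiC x y t l k * muC x t i j l

/-- Components of `-π(φ)H`, the right-hand side of the generalized bracket flow for `H`. -/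
noncomputable def flowH (x y : ℝ → ℝ) (t : ℝ) (i j k : Fin 3) : ℝ :=
  ∑ l, phiC x y t i l * HC y t l j k + ∑ l, phiC x y t j l * HC y t i l k +
    ∑ l, phiC x y t k l * HC y t i j l

set_option maxHeartbeats 1000000 in
lemma phiC_eq (x y : ℝ → ℝ) (t : ℝ) (i j : Fin 3) :
    phiC x y t i j = if i = j then
      (if i = 2 then (1/2) * x t ^ 2 else -(1/2) * x t ^ 2) - (1/2) * y t ^ 2 else 0 := by
  fin_cases i <;> fin_cases j <;>
    · simp only [phiC, muC, HC, heisC, eps, Fin.sum_univ_three]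
      norm_num [Fin.ext_iff]
      try ring

lemma flowMu_eq (x y : ℝ → ℝ) (t : ℝ) (i j k : Fin 3) :
    flowMu x y t i j k = (-(3/2) * x t ^ 3 - (1/2) * x t * y t ^ 2) * heisC i j k := by
  unfold flowMu
  simp only [phiC_eq, muC, Fin.sum_univ_three]
  fin_cases i <;> fin_cases j <;> fin_cases k <;> norm_num [Fin.ext_iff, heisC] <;> ring

lemma flowH_eq (x y : ℝ → ℝ) (t : ℝ) (i j k : Fin 3) :
    flowH x y t i j k = (-(3/2) * y t ^ 3 - (1/2) * x t ^ 2 * y t) * eps i j k := by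
  unfold flowH
  simp only [phiC_eq, HC, Fin.sum_univ_three]
  fin_cases i <;> fin_cases j <;> fin_cases k <;> norm_num [Fin.ext_iff, eps] <;> ring

/-- The pair `(μ(t), H(t)) = (x(t)μ₀, y(t)e¹²³)` solves the generalized bracket flow
`μ̇ = -π(φ)μ`, `Ḣ = -π(φ)H` with `φ = Ric_μ - (1/4)H²` iff
`ẋ = -(3/2)x³ - (1/2)xy²` and `ẏ = -(3/2)y³ - (1/2)x²y`. -/
theorem stmt18 (x y : ℝ → ℝ) :
    (∀ (t : ℝ) (i j k : Fin 3),
      HasDerivAt (fun s => muC x s i j k) (flowMu x y t i j k) t ∧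
      HasDerivAt (fun s => HC y s i j k) (flowH x y t i j k) t) ↔
    (∀ t : ℝ,
      HasDerivAt x (-(3/2) * x t ^ 3 - (1/2) * x t * y t ^ 2) t ∧
      HasDerivAt y (-(3/2) * y t ^ 3 - (1/2) * x t ^ 2 * y t) t) := by
  constructor
  · intro h t
    have h1 := (h t 0 1 2).1
    have h2 := (h t 0 1 2).2
    rw [flowMu_eq] at h1
    rw [flowH_eq] at h2
    constructor
    · have e : heisC 0 1 2 = 1 := by norm_num [heisC]
      simpa [muC, e] using h1
    · have e : eps 0 1 2 = 1 := by norm_num [eps]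
      simpa [HC, e] using h2
  · intro h t i j k
    refine ⟨?_, ?_⟩
    · rw [flowMu_eq]
      exact ((h t).1).mul_const (heisC i j k)
    · rw [flowH_eq]
      exact ((h t).2).mul_const (eps i j k)
end
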